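/- arXiv:hep-th/0309067 — 8 statements merged into one kernel-verified Lean document; each statement's English description precedes it below -/
import Mathlib

section
/- Assume e_i ≠ e_n for every i < n. Let A be the (n−1)×n matrix with entries A_{i,j} = e_i − e_n if j = i, A_{i,j} = c_{j,i} if j > i, and A_{i,j} = 0 if j < i (rows i = 1,…,n−1, columns j = 1,…,n), and set W := (−1)^{n−1}·∏_{i=1}^{n−1}(e_i − e_n)^{−1}. Then the vector P := W·∑_{k=1}^{n} (−1)^{1+k}·det(A^{(k)})·m_k, where A^{(k)} denotes A with its k-th column deleted (this is the Laplace expansion along the first row of the determinant whose first row is (m_1,…,m_n) and whose remaining rows form A), satisfies H(P) = e_n·P, and the coefficient of m_n in P equals 1, i.e., P = m_n + ∑_{k=1}^{n−1} (W·(−1)^{1+k}·det(A^{(k)}))·m_k. -/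
/-!
Let `d` be the vector of signed maximal minors of `A`. Laplace-expanding the determinant of `A`
with one of its own rows put on top gives `A d = 0`, and by the triangularity of `H`, row `i` of
this identity says precisely that the coefficient of `m i` in `H (∑ d k • m k)` is `e last * d i`.
Deleting the last column of `A` leaves an upper triangular matrix with diagonal `e i - e last`,
so `d last = (-1)^n ∏ (e i - e last)`, which `W` normalises to `1`.
-/

open Finset Matrix

section SignedMinors

variable {R : Type*} [CommRing R] {n : ℕ}

/-- The Laplace cofactors along a formal first row placed on top of `A`. -/
def signedMinors (A : Matrix (Fin n) (Fin (n + 1)) R) (k : Fin (n + 1)) : R :=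
  (-1) ^ (k : ℕ) * (A.submatrix id k.succAbove).det

theorem mulVec_signedMinors (A : Matrix (Fin n) (Fin (n + 1)) R) :
    A *ᵥ signedMinors A = 0 := by
  ext r
  have hrep : (Matrix.of (Fin.cons (A r) A) : Matrix (Fin (n + 1)) (Fin (n + 1)) R).det = 0 :=
    det_zero_of_row_eq (i := 0) (j := r.succ) (Fin.succ_ne_zero r).symm rfl
  rw [det_succ_row_zero] at hrep
  rw [Pi.zero_apply, ← hrep, mulVec, dotProduct]
  refine sum_congr rfl fun k _ => ?_
  change A r k * signedMinors A k = (-1) ^ (k : ℕ) * A r k * (A.submatrix id k.succAbove).det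
  rw [signedMinors]
  ring

theorem signedMinors_last_of_upperTriangular (A : Matrix (Fin n) (Fin (n + 1)) R)
    (hA : ∀ i j : Fin n, j < i → A i j.castSucc = 0) :
    signedMinors A (Fin.last n) = (-1) ^ n * ∏ i, A i i.castSucc := by
  have htri : (A.submatrix id (Fin.last n).succAbove).IsUpperTriangular := fun i j hji => by
    simpa using hA i j hji
  rw [signedMinors, det_of_isUpperTriangular htri, Fin.val_last]
  simp

end SignedMinors

theorem map_sum_smul_of_triangular {ι R V : Type*} [Fintype ι] [Preorder ι]
    [LocallyFiniteOrderBot ι] [LocallyFiniteOrderTop ι] [CommSemiring R] [AddCommMonoid V]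
    [Module R V] (H : V →ₗ[R] V) (m : ι → V) (e : ι → R) (c : ι → ι → R)
    (htri : ∀ j, H (m j) = e j • m j + ∑ i ∈ Iio j, c j i • m i) (d : ι → R) :
    H (∑ k, d k • m k) = ∑ k, (d k * e k + ∑ j ∈ Ioi k, c j k * d j) • m k := by
  have hswap : ∑ j, ∑ i ∈ Iio j, (c j i * d j) • m i = ∑ k, ∑ j ∈ Ioi k, (c j k * d j) • m k :=
    sum_comm' fun j i => by simp
  simp only [map_sum, map_smul, htri, smul_add, smul_sum, smul_smul, sum_add_distrib, add_smul,
    sum_smul, mul_comm (d _), hswap]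

theorem triangular_coeff_eq_of_mulVec_eq_zero {R : Type*} [CommRing R] {n : ℕ}
    (e : Fin (n + 1) → R) (c : Fin (n + 1) → Fin (n + 1) → R)
    (A : Matrix (Fin n) (Fin (n + 1)) R)
    (hA : ∀ (i : Fin n) (j : Fin (n + 1)),
      A i j = if j = i.castSucc then e i.castSucc - e (Fin.last n)
        else if i.castSucc < j then c j i.castSucc else 0)
    {d : Fin (n + 1) → R} (hd : A *ᵥ d = 0) (k : Fin (n + 1)) :
    d k * e k + ∑ j ∈ Ioi k, c j k * d j = e (Fin.last n) * d k := by
  induction k using Fin.lastCases with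
  | last => simp [Ioi_eq_empty.mpr fun j _ => Fin.le_last j, mul_comm]
  | cast i =>
    have hrow : (A *ᵥ d) i = (e i.castSucc - e (Fin.last n)) * d i.castSucc
        + ∑ j ∈ Ioi i.castSucc, c j i.castSucc * d j := by
      have hterm : ∀ j, A i j * d j =
          (if j = i.castSucc then (e i.castSucc - e (Fin.last n)) * d i.castSucc else 0)
          + (if j ∈ Ioi i.castSucc then c j i.castSucc * d j else 0) := fun j => by
        rcases lt_trichotomy j i.castSucc with h | rfl | h
        · simp [hA, h.ne, h.not_gt]
        · simp [hA]
        · simp [hA, h.ne', h]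
      rw [mulVec, dotProduct, sum_congr rfl fun j _ => hterm j, sum_add_distrib,
        sum_ite_eq' univ, sum_ite_mem, univ_inter, if_pos (mem_univ _)]
    rw [hd, Pi.zero_apply] at hrow
    linear_combination -hrow

/-- determinantal formula, Theorem 1 of the paper.
`H` acts triangularly on `m_0, …, m_n` (indices `Fin (n+1)`).  With
`A` the `n × (n+1)` matrix whose row `i` has `e i - e last` on the diagonal,
`c j i` to the right of it and `0` to the left, and
`W := (-1)^n ∏ (e i - e last)⁻¹`, the vector
`P := W • ∑_k (-1)^k det(A with column k deleted) • m k`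
(the Laplace expansion along the first row) is an eigenvector of `H` with
eigenvalue `e last`, and the coefficient of `m last` in `P` equals `1`. -/
theorem determinantal_eigenvector
    (K : Type*) [Field K] (V : Type*) [AddCommGroup V] [Module K V]
    (n : ℕ) (m : Fin (n + 1) → V) (e : Fin (n + 1) → K)
    (c : Fin (n + 1) → Fin (n + 1) → K) (H : V →ₗ[K] V)
    (htri : ∀ j : Fin (n + 1),
      H (m j) = e j • m j + ∑ i ∈ Finset.Iio j, c j i • m i)
    (hne : ∀ i : Fin n, e i.castSucc ≠ e (Fin.last n))
    (A : Matrix (Fin n) (Fin (n + 1)) K)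
    (hA : ∀ (i : Fin n) (j : Fin (n + 1)),
      A i j = if j = i.castSucc then e i.castSucc - e (Fin.last n)
        else if i.castSucc < j then c j i.castSucc else 0)
    (W : K) (hW : W = (-1 : K) ^ n * ∏ i : Fin n, (e i.castSucc - e (Fin.last n))⁻¹)
    (P : V)
    (hP : P = W • ∑ k : Fin (n + 1),
      ((-1 : K) ^ (k : ℕ) * (A.submatrix id k.succAbove).det) • m k) :
    H P = e (Fin.last n) • P ∧
      P = m (Fin.last n) + ∑ k : Fin n,
        (W * (-1 : K) ^ (k : ℕ) * (A.submatrix id k.castSucc.succAbove).det) • m k.castSucc := by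
  change P = W • ∑ k, signedMinors A k • m k at hP
  have hcoeff := triangular_coeff_eq_of_mulVec_eq_zero e c A hA (mulVec_signedMinors A)
  have hlast := signedMinors_last_of_upperTriangular A fun i j hji => by
    simp [hA, hji.ne, hji.not_gt]
  have hWd : W * signedMinors A (Fin.last n) = 1 := by
    simp only [hlast, hW, hA, mul_mul_mul_comm, ← pow_add, ← prod_mul_distrib]
    rw [Even.neg_one_pow ⟨n, rfl⟩, one_mul]
    exact prod_eq_one fun i _ => inv_mul_cancel₀ (sub_ne_zero.mpr (hne i))
  constructor
  · rw [hP, map_smul, map_sum_smul_of_triangular H m e c htri]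
    simp only [hcoeff, mul_smul, ← smul_sum, smul_comm W]
  · rw [hP, smul_sum, Fin.sum_univ_castSucc, smul_smul, hWd, one_smul, add_comm]
    simp only [signedMinors, smul_smul, mul_assoc, Fin.val_castSucc]
end

section
/- For each Λ ∈ I, the vector u := v_Λ + ∑_{Γ ≺ Λ} t_{Λ,Γ}·v_Γ satisfies H(u) = λ(w(Λ))·u, and u − J_Λ lies in the span of { J_Ω : Ω ∈ I, w(Ω) < w(Λ) }; in particular u = J_Λ + a linear combination of the J_Ω with strictly smaller weight. -/
/-!
Since `≺` preserves the weight, every `v Γ` with `Γ ≺ Λ` lies in the same eigenspace of `H` as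
`v Λ`, hence so does `u`. Next, `u - J Λ = (v Λ - m Λ) + ∑ t Λ Γ • (v Γ - m Γ)` lies in the span
of the `m` of weight `< wt Λ`. The `J` are unitriangular in the `m` with respect to `≺`, which is
well founded on the finite set `I`, so by well-founded induction (`m i = J i - (J i - m i)`)
the span of the `m` over a `≺`-downward closed set such as `{Ω | wt Ω < wt Λ}` lies in the span
of the `J` over it.
-/

open scoped Classical

open Submodule

theorem span_image_le_span_image_of_triangular {ι R V : Type*} [Ring R] [AddCommGroup V]
    [Module R V] (r : ι → ι → Prop) (hr : WellFounded r)
    (m J : ι → V) (s : Set ι) (hs : ∀ i ∈ s, ∀ j, r j i → j ∈ s)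
    (hJ : ∀ i, J i - m i ∈ span R (m '' {j | r j i})) :
    span R (m '' s) ≤ span R (J '' s) := by
  rw [span_le]
  rintro _ ⟨i, hi, rfl⟩
  induction i using hr.induction with
  | _ i ih =>
    have hlower : span R (m '' {j | r j i}) ≤ span R (J '' s) := by
      rw [span_le]
      rintro _ ⟨j, hj, rfl⟩
      exact ih j hj (hs i hi j hj)
    rw [← sub_sub_cancel (J i) (m i)]
    exact sub_mem (subset_span ⟨i, hi, rfl⟩) (hlower (hJ i))

theorem sum_smul_mem_span_image {ι R V : Type*} [Semiring R] [AddCommMonoid V] [Module R V]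
    (m : ι → V) (c : ι → R) (s : Finset ι) : ∑ j ∈ s, c j • m j ∈ span R (m '' s) :=
  sum_mem fun j hj => smul_mem _ _ (subset_span ⟨j, hj, rfl⟩)

theorem hermite_superpolynomial_eigenfunction_general
    (K : Type*) [Field K] (V : Type*) [AddCommGroup V] [Module K V]
    (I : Type*) [Fintype I] (wt : I → ℕ) (prec : I → I → Prop)
    (hstrict : IsStrictOrder I prec)
    (hwt : ∀ i j : I, prec i j → wt i = wt j)
    (m : I → V)
    (t : I → I → K) (J : I → V)
    (hJ : ∀ i : I, J i = m i + ∑ j ∈ Finset.univ.filter (fun j => prec j i), t i j • m j)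
    (H : V →ₗ[K] V) (lam : ℕ → K) (v : I → V)
    (hv : ∀ i : I, v i - m i ∈ Submodule.span K (m '' {j : I | wt j < wt i}))
    (hve : ∀ i : I, H (v i) = lam (wt i) • v i) :
    ∀ Λ : I,
      H (v Λ + ∑ Γ ∈ Finset.univ.filter (fun Γ => prec Γ Λ), t Λ Γ • v Γ)
        = lam (wt Λ) • (v Λ + ∑ Γ ∈ Finset.univ.filter (fun Γ => prec Γ Λ), t Λ Γ • v Γ) ∧
      (v Λ + ∑ Γ ∈ Finset.univ.filter (fun Γ => prec Γ Λ), t Λ Γ • v Γ) - J Λ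
        ∈ Submodule.span K (J '' {Ω : I | wt Ω < wt Λ}) := by
  intro Λ
  have := hstrict.toIrrefl
  have := hstrict.toIsTrans
  have hprec : ∀ Γ ∈ Finset.univ.filter (fun Γ => prec Γ Λ), wt Γ = wt Λ :=
    fun Γ hΓ => hwt Γ Λ (Finset.mem_filter.1 hΓ).2
  have hlower : span K (m '' {j | wt j < wt Λ}) ≤ span K (J '' {j | wt j < wt Λ}) :=
    span_image_le_span_image_of_triangular prec (Finite.wellFounded_of_trans_of_irrefl prec)
      m J _ (fun i hi j hj => (hwt j i hj).trans_lt hi) fun i => by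
        rw [hJ i, add_sub_cancel_left]
        have := sum_smul_mem_span_image m (t i) (Finset.univ.filter fun j => prec j i)
        rwa [Finset.coe_filter_univ] at this
  constructor
  · rw [← Module.End.mem_eigenspace_iff]
    refine add_mem (Module.End.mem_eigenspace_iff.2 (hve Λ))
      (sum_mem fun Γ hΓ => smul_mem _ _ ?_)
    rw [Module.End.mem_eigenspace_iff, ← hprec Γ hΓ]
    exact hve Γ
  · rw [hJ, add_sub_add_comm, ← Finset.sum_sub_distrib]
    refine hlower (add_mem (hv Λ) (sum_mem fun Γ hΓ => ?_))
    rw [← smul_sub, ← hprec Γ hΓ]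
    exact smul_mem _ _ (hv Γ)

/-- abstraction of Theorem 2 of the paper.
`I` is a finite index set with weight function `wt` and a strict partial order `prec`
preserving the weight; `(m i)` is a linearly independent family, `J i := m i + ∑_{j ≺ i}
t i j • m j`, and for each `i` a vector `v i` is given with `v i - m i` in the span of
the strictly-lower-weight `m`'s and `H (v i) = λ (wt i) • v i`.  Then for each `Λ` the
vector `u := v Λ + ∑_{Γ ≺ Λ} t Λ Γ • v Γ` satisfies `H u = λ (wt Λ) • u` and `u - J Λ`
lies in the span of the `J Ω` with `wt Ω < wt Λ`. -/
theorem hermite_superpolynomial_eigenfunction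
    (K : Type*) [Field K] (V : Type*) [AddCommGroup V] [Module K V]
    (I : Type*) [Fintype I] (wt : I → ℕ) (prec : I → I → Prop)
    (hstrict : IsStrictOrder I prec)
    (hwt : ∀ i j : I, prec i j → wt i = wt j)
    (m : I → V) (hind : LinearIndependent K m)
    (t : I → I → K) (J : I → V)
    (hJ : ∀ i : I, J i = m i + ∑ j ∈ Finset.univ.filter (fun j => prec j i), t i j • m j)
    (H : V →ₗ[K] V) (lam : ℕ → K) (v : I → V)
    (hv : ∀ i : I, v i - m i ∈ Submodule.span K (m '' {j : I | wt j < wt i}))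
    (hve : ∀ i : I, H (v i) = lam (wt i) • v i) :
    ∀ Λ : I,
      H (v Λ + ∑ Γ ∈ Finset.univ.filter (fun Γ => prec Γ Λ), t Λ Γ • v Γ)
        = lam (wt Λ) • (v Λ + ∑ Γ ∈ Finset.univ.filter (fun Γ => prec Γ Λ), t Λ Γ • v Γ) ∧
      (v Λ + ∑ Γ ∈ Finset.univ.filter (fun Γ => prec Γ Λ), t Λ Γ • v Γ) - J Λ
        ∈ Submodule.span K (J '' {Ω : I | wt Ω < wt Λ}) :=
  hermite_superpolynomial_eigenfunction_general K V I wt prec hstrict hwt m t J hJ H lam v hv hve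
end

section
/- For all natural numbers r > s, setting d := r − s, the following identity holds in ℤ[x, y]: r·(x^d·y + x·y^d) − s·(x^{d+1} + y^{d+1}) − 2·∑_{ℓ=1}^{d} x^{d+1−ℓ}·y^{ℓ} = (x − y)·( −s·(x^d − y^d) + ∑_{ℓ=1}^{⌊(d−1)/2⌋} (d − 2ℓ)·(x^{d−ℓ}·y^{ℓ} − x^{ℓ}·y^{d−ℓ}) ). -/
open MvPolynomial

local notation "x" => (MvPolynomial.X 0 : MvPolynomial (Fin 2) ℤ)
local notation "y" => (MvPolynomial.X 1 : MvPolynomial (Fin 2) ℤ)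

private lemma key_step (d : ℕ) (hd : 1 ≤ d)
    (IH : (d : MvPolynomial (Fin 2) ℤ) * (x ^ d * y + x * y ^ d)
      - 2 * ∑ ℓ ∈ Finset.Icc 1 d, x ^ (d + 1 - ℓ) * y ^ ℓ
      = (x - y) * ∑ ℓ ∈ Finset.Icc 1 ((d - 1) / 2),
          ((d - 2 * ℓ : ℕ) : MvPolynomial (Fin 2) ℤ) * (x ^ (d - ℓ) * y ^ ℓ - x ^ ℓ * y ^ (d - ℓ))) :
    ((d + 2 : ℕ) : MvPolynomial (Fin 2) ℤ) * (x ^ (d + 2) * y + x * y ^ (d + 2))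
      - 2 * ∑ ℓ ∈ Finset.Icc 1 (d + 2), x ^ (d + 2 + 1 - ℓ) * y ^ ℓ
      = (x - y) * ∑ ℓ ∈ Finset.Icc 1 ((d + 2 - 1) / 2),
          ((d + 2 - 2 * ℓ : ℕ) : MvPolynomial (Fin 2) ℤ)
            * (x ^ (d + 2 - ℓ) * y ^ ℓ - x ^ ℓ * y ^ (d + 2 - ℓ)) := by
  have hS : ∑ ℓ ∈ Finset.Icc 1 (d + 2), x ^ (d + 2 + 1 - ℓ) * y ^ ℓ
      = x ^ (d + 2) * y + x * y ^ (d + 2)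
        + (x * y) * ∑ ℓ ∈ Finset.Icc 1 d, x ^ (d + 1 - ℓ) * y ^ ℓ := by
    rw [← Finset.Ico_add_one_right_eq_Icc, ← Finset.Ico_add_one_right_eq_Icc, Finset.sum_Ico_eq_sum_range,
      Finset.sum_Ico_eq_sum_range]
    simp only [Nat.add_sub_cancel, Nat.succ_sub_one]
    rw [Finset.sum_range_succ', Finset.sum_range_succ, Finset.mul_sum]
    have h1 : ∀ i ∈ Finset.range d,
        x ^ (d + 2 + 1 - (1 + (i + 1))) * y ^ (1 + (i + 1))
          = x * y * (x ^ (d + 1 - (1 + i)) * y ^ (1 + i)) := by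
      intro i hi
      simp only [Finset.mem_range] at hi
      rw [show d + 2 + 1 - (1 + (i + 1)) = (d + 1 - (1 + i)) + 1 by omega,
        show 1 + (i + 1) = (1 + i) + 1 by omega]
      ring
    rw [Finset.sum_congr rfl h1,
      show d + 2 + 1 - (1 + (d + 1)) = 1 by omega,
      show d + 2 + 1 - (1 + 0) = d + 2 by omega]
    ring
  have hT : ∑ ℓ ∈ Finset.Icc 1 ((d + 2 - 1) / 2),
        ((d + 2 - 2 * ℓ : ℕ) : MvPolynomial (Fin 2) ℤ)
          * (x ^ (d + 2 - ℓ) * y ^ ℓ - x ^ ℓ * y ^ (d + 2 - ℓ))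
      = (d : MvPolynomial (Fin 2) ℤ) * (x ^ (d + 1) * y - x * y ^ (d + 1))
        + (x * y) * ∑ ℓ ∈ Finset.Icc 1 ((d - 1) / 2),
            ((d - 2 * ℓ : ℕ) : MvPolynomial (Fin 2) ℤ)
              * (x ^ (d - ℓ) * y ^ ℓ - x ^ ℓ * y ^ (d - ℓ)) := by
    rw [show (d + 2 - 1) / 2 = (d - 1) / 2 + 1 by omega]
    rw [← Finset.Ico_add_one_right_eq_Icc, ← Finset.Ico_add_one_right_eq_Icc, Finset.sum_Ico_eq_sum_range,
      Finset.sum_Ico_eq_sum_range]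
    simp only [Nat.add_sub_cancel, Nat.succ_sub_one]
    rw [Finset.sum_range_succ', Finset.mul_sum]
    have h1 : ∀ i ∈ Finset.range ((d - 1) / 2),
        ((d + 2 - 2 * (1 + (i + 1)) : ℕ) : MvPolynomial (Fin 2) ℤ)
            * (x ^ (d + 2 - (1 + (i + 1))) * y ^ (1 + (i + 1))
              - x ^ (1 + (i + 1)) * y ^ (d + 2 - (1 + (i + 1))))
          = x * y * (((d - 2 * (1 + i) : ℕ) : MvPolynomial (Fin 2) ℤ)
              * (x ^ (d - (1 + i)) * y ^ (1 + i) - x ^ (1 + i) * y ^ (d - (1 + i)))) := by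
      intro i hi
      simp only [Finset.mem_range] at hi
      rw [show d + 2 - 2 * (1 + (i + 1)) = d - 2 * (1 + i) by omega,
        show d + 2 - (1 + (i + 1)) = (d - (1 + i)) + 1 by omega,
        show 1 + (i + 1) = (1 + i) + 1 by omega]
      ring
    rw [Finset.sum_congr rfl h1,
      show d + 2 - 2 * (1 + 0) = d by omega,
      show d + 2 - (1 + 0) = d + 1 by omega]
    push_cast
    ring
  rw [hS, hT]
  push_cast
  linear_combination (x * y) * IH

private lemma key (d : ℕ) :
    (d : MvPolynomial (Fin 2) ℤ) * (x ^ d * y + x * y ^ d)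
      - 2 * ∑ ℓ ∈ Finset.Icc 1 d, x ^ (d + 1 - ℓ) * y ^ ℓ
      = (x - y) * ∑ ℓ ∈ Finset.Icc 1 ((d - 1) / 2),
          ((d - 2 * ℓ : ℕ) : MvPolynomial (Fin 2) ℤ)
            * (x ^ (d - ℓ) * y ^ ℓ - x ^ ℓ * y ^ (d - ℓ)) := by
  induction d using Nat.strong_induction_on with
  | _ d ih =>
    match d with
    | 0 => simp
    | 1 =>
      simp [Finset.Icc_self]
      ring
    | 2 =>
      rw [show Finset.Icc 1 2 = {1, 2} by decide, show (2 - 1) / 2 = 0 by norm_num]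
      simp
    | (n + 3) =>
      exact key_step (n + 1) (by omega) (ih (n + 1) (by omega))

/-- Eq. (3.11) of the paper.  For `r > s`, with `d = r - s`,
`r(x^d y + x y^d) - s(x^{d+1} + y^{d+1}) - 2 ∑_{ℓ=1}^{d} x^{d+1-ℓ} y^ℓ`
factors as `(x-y)( -s(x^d - y^d) + ∑_{ℓ=1}^{⌊(d-1)/2⌋} (d-2ℓ)(x^{d-ℓ}y^ℓ - x^ℓ y^{d-ℓ}) )`. -/
theorem caseI_factorization (r s : ℕ) (hrs : s < r) :
    (r : MvPolynomial (Fin 2) ℤ) * (x ^ (r - s) * y + x * y ^ (r - s))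
      - (s : MvPolynomial (Fin 2) ℤ) * (x ^ (r - s + 1) + y ^ (r - s + 1))
      - 2 * ∑ ℓ ∈ Finset.Icc 1 (r - s), x ^ (r - s + 1 - ℓ) * y ^ ℓ
    = (x - y) *
        (-(s : MvPolynomial (Fin 2) ℤ) * (x ^ (r - s) - y ^ (r - s))
          + ∑ ℓ ∈ Finset.Icc 1 ((r - s - 1) / 2),
              ((r - s - 2 * ℓ : ℕ) : MvPolynomial (Fin 2) ℤ)
                * (x ^ (r - s - ℓ) * y ^ ℓ - x ^ ℓ * y ^ (r - s - ℓ))) := by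
  have hr : (r : MvPolynomial (Fin 2) ℤ) = (s : ℕ) + ((r - s : ℕ) : MvPolynomial (Fin 2) ℤ) := by
    rw [← Nat.cast_add]
    congr 1
    omega
  rw [hr]
  linear_combination key (r - s)
end

section
/- For all natural numbers r, s with r > s ≥ 1, the following identity holds in ℤ[x, y]: (∂x − ∂y)(x^r·y^s + x^s·y^r) = (x − y)·( r·∑_{ℓ=0}^{r−s−2} x^{r−2−ℓ}·y^{s+ℓ} − s·∑_{ℓ=0}^{r−s} x^{r−1−ℓ}·y^{s−1+ℓ} ), where an empty sum is zero. -/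
open MvPolynomial

local notation "x" => (MvPolynomial.X 0 : MvPolynomial (Fin 2) ℤ)
local notation "y" => (MvPolynomial.X 1 : MvPolynomial (Fin 2) ℤ)

lemma geomfac (n : ℕ) :
    (x - y) * ∑ ℓ ∈ Finset.range n, x ^ (n - 1 - ℓ) * y ^ ℓ = x ^ n - y ^ n := by
  have hr : ∑ ℓ ∈ Finset.range n, x ^ (n - 1 - ℓ) * y ^ ℓ
      = ∑ i ∈ Finset.range n, x ^ i * y ^ (n - 1 - i) := by
    rw [← Finset.sum_range_reflect (fun i => x ^ i * y ^ (n - 1 - i)) n]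
    exact Finset.sum_congr rfl fun j hj => by
      rw [Finset.mem_range] at hj
      congr 2
      omega
  rw [hr, mul_comm, geom_sum₂_mul]

/-- Case III of the paper.  For `r > s ≥ 1`,
`(∂x - ∂y)(x^r y^s + x^s y^r)
  = (x - y)( r ∑_{ℓ=0}^{r-s-2} x^{r-2-ℓ} y^{s+ℓ} - s ∑_{ℓ=0}^{r-s} x^{r-1-ℓ} y^{s-1+ℓ} )`,
with empty sums equal to zero. -/
theorem caseIII_action (r s : ℕ) (hs : 1 ≤ s) (hrs : s < r) :
    pderiv (0 : Fin 2) (x ^ r * y ^ s + x ^ s * y ^ r)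
      - pderiv (1 : Fin 2) (x ^ r * y ^ s + x ^ s * y ^ r)
    = (x - y) *
        ((r : MvPolynomial (Fin 2) ℤ)
            * ∑ ℓ ∈ Finset.range (r - s - 1), x ^ (r - 2 - ℓ) * y ^ (s + ℓ)
          - (s : MvPolynomial (Fin 2) ℤ)
            * ∑ ℓ ∈ Finset.range (r - s + 1), x ^ (r - 1 - ℓ) * y ^ (s - 1 + ℓ)) := by
  obtain ⟨t, rfl⟩ : ∃ t, s = t + 1 := ⟨s - 1, by omega⟩
  obtain ⟨m, rfl⟩ : ∃ m, r = t + 1 + (m + 1) := ⟨r - (t + 1) - 1, by omega⟩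
  have h1 : ∑ ℓ ∈ Finset.range (t + 1 + (m + 1) - (t + 1) - 1),
        x ^ (t + 1 + (m + 1) - 2 - ℓ) * y ^ (t + 1 + ℓ)
      = x ^ (t + 1) * y ^ (t + 1) * ∑ ℓ ∈ Finset.range m, x ^ (m - 1 - ℓ) * y ^ ℓ := by
    rw [Finset.mul_sum]
    apply Finset.sum_congr (by congr 1; omega)
    intro ℓ hℓ
    rw [Finset.mem_range] at hℓ
    rw [show t + 1 + (m + 1) - 2 - ℓ = (t + 1) + (m - 1 - ℓ) by omega,
      show t + 1 + ℓ = (t + 1) + ℓ by omega, pow_add, pow_add]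
    ring
  have h2 : ∑ ℓ ∈ Finset.range (t + 1 + (m + 1) - (t + 1) + 1),
        x ^ (t + 1 + (m + 1) - 1 - ℓ) * y ^ (t + 1 - 1 + ℓ)
      = x ^ t * y ^ t * ∑ ℓ ∈ Finset.range (m + 2), x ^ (m + 2 - 1 - ℓ) * y ^ ℓ := by
    rw [Finset.mul_sum]
    apply Finset.sum_congr (by congr 1; omega)
    intro ℓ hℓ
    rw [Finset.mem_range] at hℓ
    rw [show t + 1 + (m + 1) - 1 - ℓ = t + (m + 2 - 1 - ℓ) by omega,
      show t + 1 - 1 + ℓ = t + ℓ by omega, pow_add, pow_add]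
    ring
  rw [h1, h2]
  have g1 := geomfac m
  have g2 : (x - y) * ∑ ℓ ∈ Finset.range (m + 2), x ^ (m + 1 - ℓ) * y ^ ℓ
      = x ^ (m + 2) - y ^ (m + 2) := by simpa using geomfac (m + 2)
  simp only [map_add, pderiv_mul, pderiv_pow, pderiv_X_self,
    pderiv_X_of_ne (show (0 : Fin 2) ≠ 1 by decide),
    pderiv_X_of_ne (show (1 : Fin 2) ≠ 0 by decide)]
  push_cast
  rw [show t + 1 + (m + 1) - 1 = t + m + 1 by omega]
  linear_combination ((t : MvPolynomial (Fin 2) ℤ) + 1) * (x ^ t * y ^ t) * g2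
    - ((t : MvPolynomial (Fin 2) ℤ) + 1 + (m + 1)) * (x ^ (t + 1) * y ^ (t + 1)) * g1
end

section
/- For all natural numbers r, s with r > s ≥ 1, the following identity holds in ℤ[x, y]: r·∑_{ℓ=0}^{r−s−2} x^{r−2−ℓ}·y^{s+ℓ} − s·∑_{ℓ=0}^{r−s} x^{r−1−ℓ}·y^{s−1+ℓ} = −s·(x^{r−1}·y^{s−1} + x^{s−1}·y^{r−1}) + (r − s)·∑_{ℓ=1}^{⌊(r−s)/2⌋} m_{(r−1−ℓ, s−1+ℓ)}, where an empty sum is zero. -/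
/-! With `d = r - s` and `f ℓ = x^(r-1-ℓ) y^(s-1+ℓ)`, the first sum is the interior
`∑_{0<ℓ<d} f ℓ`, the second is that interior plus the two end terms `f 0` and `f d`, and
pairing `ℓ` with `d - ℓ` folds the interior into the symmetric monomials `m_{(r-1-ℓ, s-1+ℓ)}`
for `1 ≤ ℓ ≤ d/2`. The identity is then linear in these three quantities. -/

open MvPolynomial

local notation "x" => (MvPolynomial.X 0 : MvPolynomial (Fin 2) ℤ)
local notation "y" => (MvPolynomial.X 1 : MvPolynomial (Fin 2) ℤ)

noncomputable def msym (a b : ℕ) : MvPolynomial (Fin 2) ℤ :=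
  if a = b then x ^ a * y ^ a else x ^ a * y ^ b + x ^ b * y ^ a

open Finset

theorem Finset.sum_range_succ_eq_add_sum_Ioo_add {M : Type*} [AddCommMonoid M] (f : ℕ → M)
    {d : ℕ} (hd : 0 < d) :
    ∑ ℓ ∈ range (d + 1), f ℓ = f 0 + ∑ ℓ ∈ Ioo 0 d, f ℓ + f d := by
  rw [sum_range_succ, range_eq_Ico, add_sum_Ioo_eq_sum_Ico hd]

theorem Finset.sum_Ioo_zero_eq_sum_Icc_half {M : Type*} [AddCommMonoid M] (f : ℕ → M) (d : ℕ) :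
    ∑ ℓ ∈ Ioo 0 d, f ℓ = ∑ ℓ ∈ Icc 1 (d / 2), if d - ℓ = ℓ then f ℓ else f ℓ + f (d - ℓ) := by
  have hsplit : Ioo 0 d = Icc 1 (d / 2) ∪ Ioo (d / 2) d := by
    ext ℓ; simp only [mem_Ioo, mem_union, mem_Icc]; omega
  have hdisj : Disjoint (Icc 1 (d / 2)) (Ioo (d / 2) d) :=
    disjoint_left.2 fun ℓ h₁ h₂ => by simp only [mem_Icc, mem_Ioo] at h₁ h₂; omega
  have hreflect : ∑ ℓ ∈ Icc 1 (d / 2), (if d - ℓ ≠ ℓ then f (d - ℓ) else 0)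
      = ∑ ℓ ∈ Ioo (d / 2) d, f ℓ := by
    rw [← sum_filter]
    refine sum_nbij' (d - ·) (d - ·) ?_ ?_ ?_ ?_ fun ℓ _ => rfl <;>
      intro ℓ hℓ <;> simp only [mem_filter, mem_Icc, mem_Ioo] at hℓ ⊢ <;> omega
  rw [hsplit, sum_union hdisj, ← hreflect, ← sum_add_distrib]
  refine sum_congr rfl fun ℓ _ => ?_
  split_ifs <;> simp_all

theorem sum_Icc_msym_eq_sum_Ioo (a b : ℕ) :
    ∑ ℓ ∈ Icc 1 ((a - b) / 2), msym (a - ℓ) (b + ℓ)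
      = ∑ ℓ ∈ Ioo 0 (a - b), x ^ (a - ℓ) * y ^ (b + ℓ) := by
  rw [sum_Ioo_zero_eq_sum_Icc_half]
  refine sum_congr rfl fun ℓ hℓ => ?_
  simp only [mem_Icc] at hℓ
  by_cases h : a - b - ℓ = ℓ
  · rw [msym, if_pos (by omega), if_pos h, show b + ℓ = a - ℓ by omega]
  · rw [msym, if_neg (by omega), if_neg h]
    congr 3 <;> omega

/-- final monomial expansion in Case III of the paper.  For `r > s ≥ 1`,
`r ∑_{ℓ=0}^{r-s-2} x^{r-2-ℓ} y^{s+ℓ} - s ∑_{ℓ=0}^{r-s} x^{r-1-ℓ} y^{s-1+ℓ}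
  = -s (x^{r-1} y^{s-1} + x^{s-1} y^{r-1})
    + (r-s) ∑_{ℓ=1}^{⌊(r-s)/2⌋} m_{(r-1-ℓ, s-1+ℓ)}`,
with empty sums equal to zero. -/
theorem caseIII_monomial_expansion (r s : ℕ) (hs : 1 ≤ s) (hrs : s < r) :
    (r : MvPolynomial (Fin 2) ℤ)
        * ∑ ℓ ∈ Finset.range (r - s - 1), x ^ (r - 2 - ℓ) * y ^ (s + ℓ)
      - (s : MvPolynomial (Fin 2) ℤ)
        * ∑ ℓ ∈ Finset.range (r - s + 1), x ^ (r - 1 - ℓ) * y ^ (s - 1 + ℓ)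
    = -(s : MvPolynomial (Fin 2) ℤ) * (x ^ (r - 1) * y ^ (s - 1) + x ^ (s - 1) * y ^ (r - 1))
      + ((r - s : ℕ) : MvPolynomial (Fin 2) ℤ)
        * ∑ ℓ ∈ Finset.Icc 1 ((r - s) / 2), msym (r - 1 - ℓ) (s - 1 + ℓ) := by
  set f : ℕ → MvPolynomial (Fin 2) ℤ := fun ℓ => x ^ (r - 1 - ℓ) * y ^ (s - 1 + ℓ)
  have hinner : ∑ ℓ ∈ range (r - s - 1), x ^ (r - 2 - ℓ) * y ^ (s + ℓ)
      = ∑ ℓ ∈ Ioo 0 (r - s), f ℓ := by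
    rw [← Ico_add_one_left_eq_Ioo, sum_Ico_eq_sum_range]
    refine sum_congr rfl fun ℓ _ => ?_
    simp only [f]
    congr 2 <;> omega
  have hfull : ∑ ℓ ∈ range (r - s + 1), f ℓ
      = x ^ (r - 1) * y ^ (s - 1) + ∑ ℓ ∈ Ioo 0 (r - s), f ℓ + x ^ (s - 1) * y ^ (r - 1) := by
    rw [sum_range_succ_eq_add_sum_Ioo_add f (by omega)]
    simp only [f]
    congr 3 <;> omega
  have hsym := sum_Icc_msym_eq_sum_Ioo (r - 1) (s - 1)
  rw [show r - 1 - (s - 1) = r - s by omega] at hsym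
  rw [hinner, hfull, hsym, Nat.cast_sub hrs.le]
  ring
end

section
/- For all natural numbers r, s with r > s ≥ 1, setting d := r − s, the following identity holds in ℤ[x, y]: (x − y)·(∂x − ∂y)(x^r·y^s − x^s·y^r) − 2·(x^r·y^s − x^s·y^r) = (x − y)·x^{s−1}·y^{s−1}·( r·(x^d·y + x·y^d) − s·(x^{d+1} + y^{d+1}) − 2·∑_{ℓ=1}^{d} x^{d+1−ℓ}·y^{ℓ} ). -/
open MvPolynomial

local notation "x" => (MvPolynomial.X 0 : MvPolynomial (Fin 2) ℤ)
local notation "y" => (MvPolynomial.X 1 : MvPolynomial (Fin 2) ℤ)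

lemma telescope (d : ℕ) :
    (x - y) * ∑ ℓ ∈ Finset.Icc 1 d, x ^ (d + 1 - ℓ) * y ^ ℓ
      = x ^ (d + 1) * y - x * y ^ (d + 1) := by
  induction d with
  | zero => simp [Finset.Icc_eq_empty_of_lt]
  | succ d ih =>
    rw [Finset.sum_Icc_succ_top (by omega : 1 ≤ d + 1)]
    have h : ∑ ℓ ∈ Finset.Icc 1 d, x ^ (d + 1 + 1 - ℓ) * y ^ ℓ
        = x * ∑ ℓ ∈ Finset.Icc 1 d, x ^ (d + 1 - ℓ) * y ^ ℓ := by
      rw [Finset.mul_sum]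
      refine Finset.sum_congr rfl fun ℓ hℓ => ?_
      have : ℓ ≤ d := (Finset.mem_Icc.mp hℓ).2
      have : d + 1 + 1 - ℓ = (d + 1 - ℓ) + 1 := by omega
      rw [this, pow_succ]; ring
    rw [h]
    have : d + 1 + 1 - (d + 1) = 1 := by omega
    rw [this]
    linear_combination x * ih

/-- intermediate computation in Case I of the paper.  For `r > s ≥ 1`,
with `d = r - s`,
`(x-y)(∂x-∂y)(x^r y^s - x^s y^r) - 2(x^r y^s - x^s y^r)
  = (x-y) x^{s-1} y^{s-1} ( r(x^d y + x y^d) - s(x^{d+1}+y^{d+1})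
      - 2 ∑_{ℓ=1}^{d} x^{d+1-ℓ} y^ℓ )`. -/
theorem caseI_intermediate (r s : ℕ) (hs : 1 ≤ s) (hrs : s < r) :
    (x - y) * (pderiv (0 : Fin 2) (x ^ r * y ^ s - x ^ s * y ^ r)
        - pderiv (1 : Fin 2) (x ^ r * y ^ s - x ^ s * y ^ r))
      - 2 * (x ^ r * y ^ s - x ^ s * y ^ r)
    = (x - y) * x ^ (s - 1) * y ^ (s - 1) *
        ((r : MvPolynomial (Fin 2) ℤ) * (x ^ (r - s) * y + x * y ^ (r - s))
          - (s : MvPolynomial (Fin 2) ℤ) * (x ^ (r - s + 1) + y ^ (r - s + 1))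
          - 2 * ∑ ℓ ∈ Finset.Icc 1 (r - s), x ^ (r - s + 1 - ℓ) * y ^ ℓ) := by
  obtain ⟨t, rfl⟩ : ∃ t, s = t + 1 := ⟨s - 1, by omega⟩
  obtain ⟨d, rfl⟩ : ∃ d, r = (t + 1) + d := ⟨r - (t + 1), by omega⟩
  have h1 : t + 1 + d - (t + 1) = d := by omega
  have h2 : t + 1 - 1 = t := by omega
  rw [h1, h2]
  simp only [map_sub, Derivation.leibniz, Derivation.leibniz_pow, pderiv_X_self,
    pderiv_X_of_ne (show (0 : Fin 2) ≠ 1 by decide),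
    pderiv_X_of_ne (show (1 : Fin 2) ≠ 0 by decide),
    smul_zero, mul_zero, zero_mul, add_zero, zero_add, smul_eq_mul, mul_one,
    nsmul_eq_mul, Nat.cast_add, Nat.cast_one]
  have h3 : t + 1 + d - 1 = t + d := by omega
  have h4 : t + 1 - 1 = t := by omega
  rw [h3, h4]
  linear_combination (2 * x ^ t * y ^ t) * telescope d
end

section
/- For all natural numbers r, s with r > s ≥ 1, the following identity holds in ℤ[x, y]: (x − y)·(∂x − ∂y)(x^r·y^s − x^s·y^r) − 2·(x^r·y^s − x^s·y^r) = (x − y)²·( −s·(x^{r−1}·y^{s−1} − x^{s−1}·y^{r−1}) + ∑_{ℓ=1}^{⌊(r−s−1)/2⌋} (r − s − 2ℓ)·(x^{r−1−ℓ}·y^{s−1+ℓ} − x^{s−1+ℓ}·y^{r−1−ℓ}) ), where an empty sum is zero. -/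
open MvPolynomial

local notation "x" => (MvPolynomial.X 0 : MvPolynomial (Fin 2) ℤ)
local notation "y" => (MvPolynomial.X 1 : MvPolynomial (Fin 2) ℤ)

/-- Boundary terms for the telescoping sum. -/
noncomputable def TT (b d ℓ : ℕ) : MvPolynomial (Fin 2) ℤ :=
  x ^ (b + 1 + (d - ℓ)) * y ^ (b + 1 + ℓ) - x ^ (b + 1 + ℓ) * y ^ (b + 1 + (d - ℓ))

/-- Telescoping identity: since the coefficients `d - 2ℓ` are linear in `ℓ` and
`(x-y)^2 · A_ℓ` is a second difference of the `TT`'s, only boundary terms survive. -/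
lemma tele (b d : ℕ) : ∀ m : ℕ, 2 * m + 1 ≤ d →
    (x - y) ^ 2 * ∑ ℓ ∈ Finset.Icc 1 m,
        ((d : MvPolynomial (Fin 2) ℤ) - 2 * (ℓ : MvPolynomial (Fin 2) ℤ)) *
          (x ^ (b + (d - ℓ)) * y ^ (b + ℓ) - x ^ (b + ℓ) * y ^ (b + (d - ℓ)))
    = ((d : MvPolynomial (Fin 2) ℤ) - 2) * TT b d 0
        - (d : MvPolynomial (Fin 2) ℤ) * TT b d 1
        - ((d : MvPolynomial (Fin 2) ℤ) - 2 * ((m : MvPolynomial (Fin 2) ℤ) + 1)) * TT b d m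
        + ((d : MvPolynomial (Fin 2) ℤ) - 2 * (m : MvPolynomial (Fin 2) ℤ)) * TT b d (m + 1) := by
  intro m
  induction m with
  | zero =>
    intro _
    simp only [Finset.Icc_self, Nat.cast_zero]
    rw [show Finset.Icc 1 0 = (∅ : Finset ℕ) from rfl]
    simp only [Finset.sum_empty, mul_zero]
    ring
  | succ m ih =>
    intro h
    rw [Finset.sum_Icc_succ_top (by omega : 1 ≤ m + 1), mul_add, ih (by omega)]
    obtain ⟨k, hk⟩ : ∃ k, d = k + (m + 2) + 1 := ⟨d - (m + 3), by omega⟩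
    subst hk
    have h1 : k + (m + 2) + 1 - (m + 1) = k + 2 := by omega
    have h2 : k + (m + 2) + 1 - m = k + 3 := by omega
    have h3 : k + (m + 2) + 1 - (m + 2) = k + 1 := by omega
    simp only [TT, h1, h2, h3]
    push_cast
    ring

/-- Eq. (3.12) of the paper; Case I, final form.  For `r > s ≥ 1`,
`(x-y)(∂x-∂y)(x^r y^s - x^s y^r) - 2(x^r y^s - x^s y^r)
  = (x-y)² ( -s(x^{r-1}y^{s-1} - x^{s-1}y^{r-1})
      + ∑_{ℓ=1}^{⌊(r-s-1)/2⌋} (r-s-2ℓ)(x^{r-1-ℓ}y^{s-1+ℓ} - x^{s-1+ℓ}y^{r-1-ℓ}) )`,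
with an empty sum equal to zero. -/
theorem caseI_final (r s : ℕ) (hs : 1 ≤ s) (hrs : s < r) :
    (x - y) * (pderiv (0 : Fin 2) (x ^ r * y ^ s - x ^ s * y ^ r)
        - pderiv (1 : Fin 2) (x ^ r * y ^ s - x ^ s * y ^ r))
      - 2 * (x ^ r * y ^ s - x ^ s * y ^ r)
    = (x - y) ^ 2 *
        (-(s : MvPolynomial (Fin 2) ℤ)
            * (x ^ (r - 1) * y ^ (s - 1) - x ^ (s - 1) * y ^ (r - 1))
          + ∑ ℓ ∈ Finset.Icc 1 ((r - s - 1) / 2),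
              ((r - s - 2 * ℓ : ℕ) : MvPolynomial (Fin 2) ℤ)
                * (x ^ (r - 1 - ℓ) * y ^ (s - 1 + ℓ)
                    - x ^ (s - 1 + ℓ) * y ^ (r - 1 - ℓ))) := by
  obtain ⟨b, rfl⟩ : ∃ b, s = b + 1 := ⟨s - 1, by omega⟩
  obtain ⟨e, rfl⟩ : ∃ e, r = b + 1 + (e + 1) := ⟨r - (b + 1) - 1, by omega⟩
  have hM : (b + 1 + (e + 1) - (b + 1) - 1) / 2 = e / 2 := by omega
  have hsum : ∑ ℓ ∈ Finset.Icc 1 ((b + 1 + (e + 1) - (b + 1) - 1) / 2),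
        ((b + 1 + (e + 1) - (b + 1) - 2 * ℓ : ℕ) : MvPolynomial (Fin 2) ℤ)
          * (x ^ (b + 1 + (e + 1) - 1 - ℓ) * y ^ (b + 1 - 1 + ℓ)
              - x ^ (b + 1 - 1 + ℓ) * y ^ (b + 1 + (e + 1) - 1 - ℓ))
      = ∑ ℓ ∈ Finset.Icc 1 (e / 2),
          (((e + 1 : ℕ) : MvPolynomial (Fin 2) ℤ) - 2 * (ℓ : MvPolynomial (Fin 2) ℤ)) *
            (x ^ (b + (e + 1 - ℓ)) * y ^ (b + ℓ) - x ^ (b + ℓ) * y ^ (b + (e + 1 - ℓ))) := by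
    rw [hM]
    refine Finset.sum_congr rfl fun ℓ hℓ => ?_
    simp only [Finset.mem_Icc] at hℓ
    rw [show b + 1 + (e + 1) - (b + 1) - 2 * ℓ = e + 1 - 2 * ℓ from by omega,
      show b + 1 + (e + 1) - 1 - ℓ = b + (e + 1 - ℓ) from by omega,
      show b + 1 - 1 + ℓ = b + ℓ from by omega,
      Nat.cast_sub (by omega : 2 * ℓ ≤ e + 1)]
    push_cast
    ring
  rw [mul_add, hsum, tele b (e + 1) (e / 2) (by omega)]
  simp only [pderiv_pow, pderiv_X_self, pderiv_X_of_ne, map_sub, pderiv_mul, TT,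
    show (0 : Fin 2) ≠ 1 from by decide, show (1 : Fin 2) ≠ 0 from by decide,
    Ne, not_false_eq_true, smul_eq_mul]
  simp only [show b + 1 + (e + 1) - 1 = b + 1 + e from by omega,
    show b + 1 - 1 = b from by omega]
  rcases Nat.even_or_odd e with ⟨M, hM2⟩ | ⟨M, hM2⟩
  · subst hM2
    rw [show (M + M) / 2 = M from by omega,
      show M + M + 1 - 0 = M + M + 1 from rfl,
      show M + M + 1 - 1 = M + M from by omega,
      show M + M + 1 - M = M + 1 from by omega,
      show M + M + 1 - (M + 1) = M from by omega]
    push_cast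
    ring
  · subst hM2
    rw [show (2 * M + 1) / 2 = M from by omega,
      show 2 * M + 1 + 1 - 0 = 2 * M + 2 from rfl,
      show 2 * M + 1 + 1 - 1 = 2 * M + 1 from by omega,
      show 2 * M + 1 + 1 - M = M + 2 from by omega,
      show 2 * M + 1 + 1 - (M + 1) = M + 1 from by omega]
    push_cast
    ring
end

section
/- For all natural numbers r, s with s > r ≥ 1, the following identity holds in ℤ[x, y]: (x − y)·(r·x^{r−1}·y^{s} − s·x^{r}·y^{s−1}) − (x^r·y^s − x^s·y^r) = (x − y)²·( −r·x^{r−1}·y^{s−1} + ∑_{ℓ=1}^{s−r−1} (s − r − ℓ)·x^{r−1+ℓ}·y^{s−1−ℓ} ), where an empty sum is zero. -/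
open MvPolynomial

local notation "x" => (MvPolynomial.X 0 : MvPolynomial (Fin 2) ℤ)
local notation "y" => (MvPolynomial.X 1 : MvPolynomial (Fin 2) ℤ)

private lemma geom_aux (d : ℕ) :
    (x - y) * ∑ ℓ ∈ Finset.Icc 1 d, x ^ ℓ * y ^ (d + 1 - ℓ)
      = x ^ (d + 1) * y - x * y ^ (d + 1) := by
  induction d with
  | zero => simp
  | succ d ih =>
    rw [Finset.sum_Icc_succ_top (by omega : 1 ≤ d + 1)]
    have h : ∑ ℓ ∈ Finset.Icc 1 d, x ^ ℓ * y ^ (d + 1 + 1 - ℓ)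
        = y * ∑ ℓ ∈ Finset.Icc 1 d, x ^ ℓ * y ^ (d + 1 - ℓ) := by
      rw [Finset.mul_sum]
      refine Finset.sum_congr rfl fun ℓ hℓ => ?_
      simp only [Finset.mem_Icc] at hℓ
      rw [show d + 1 + 1 - ℓ = (d + 1 - ℓ) + 1 from by omega, pow_succ]
      ring
    rw [h, show d + 1 + 1 - (d + 1) = 1 from by omega]
    linear_combination y * ih

private lemma core_aux (d : ℕ) (hd : 1 ≤ d) :
    (x - y) ^ 2 * ∑ ℓ ∈ Finset.Icc 1 (d - 1),
        ((d - ℓ : ℕ) : MvPolynomial (Fin 2) ℤ) * x ^ ℓ * y ^ (d - ℓ)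
      = x ^ (d + 1) * y - x * y ^ (d + 1)
        - (d : MvPolynomial (Fin 2) ℤ) * x * y ^ d * (x - y) := by
  induction d, hd using Nat.le_induction with
  | base => simp; ring
  | succ d hd ih =>
    have hsplit : ∑ ℓ ∈ Finset.Icc 1 (d + 1 - 1),
        ((d + 1 - ℓ : ℕ) : MvPolynomial (Fin 2) ℤ) * x ^ ℓ * y ^ (d + 1 - ℓ)
        = y * ∑ ℓ ∈ Finset.Icc 1 (d - 1),
            ((d - ℓ : ℕ) : MvPolynomial (Fin 2) ℤ) * x ^ ℓ * y ^ (d - ℓ)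
          + ∑ ℓ ∈ Finset.Icc 1 d, x ^ ℓ * y ^ (d + 1 - ℓ) := by
      have h1 : ∀ ℓ ∈ Finset.Icc 1 d,
          ((d + 1 - ℓ : ℕ) : MvPolynomial (Fin 2) ℤ) * x ^ ℓ * y ^ (d + 1 - ℓ)
          = y * (((d - ℓ : ℕ) : MvPolynomial (Fin 2) ℤ) * x ^ ℓ * y ^ (d - ℓ))
            + x ^ ℓ * y ^ (d + 1 - ℓ) := by
        intro ℓ hℓ
        simp only [Finset.mem_Icc] at hℓ
        rw [show d + 1 - ℓ = (d - ℓ) + 1 from by omega, pow_succ,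
          Nat.cast_add, Nat.cast_one]
        ring
      rw [show d + 1 - 1 = d from rfl, Finset.sum_congr rfl h1, Finset.sum_add_distrib,
        Finset.mul_sum]
      congr 1
      obtain ⟨e, rfl⟩ : ∃ e, d = e + 1 := ⟨d - 1, by omega⟩
      rw [Finset.sum_Icc_succ_top (by omega : 1 ≤ e + 1)]
      simp
    rw [hsplit]
    have hg := geom_aux d
    push_cast
    linear_combination y * ih + (x - y) * hg

/-- Eq. (3.22) of the paper; Case II, `r < s`.  For `s > r ≥ 1`,
`(x-y)(r x^{r-1} y^s - s x^r y^{s-1}) - (x^r y^s - x^s y^r)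
  = (x-y)² ( -r x^{r-1} y^{s-1} + ∑_{ℓ=1}^{s-r-1} (s-r-ℓ) x^{r-1+ℓ} y^{s-1-ℓ} )`,
with an empty sum equal to zero. -/
theorem caseII_theta1_rlts (r s : ℕ) (hr : 1 ≤ r) (hrs : r < s) :
    (x - y) * ((r : MvPolynomial (Fin 2) ℤ) * x ^ (r - 1) * y ^ s
        - (s : MvPolynomial (Fin 2) ℤ) * x ^ r * y ^ (s - 1))
      - (x ^ r * y ^ s - x ^ s * y ^ r)
    = (x - y) ^ 2 *
        (-(r : MvPolynomial (Fin 2) ℤ) * x ^ (r - 1) * y ^ (s - 1)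
          + ∑ ℓ ∈ Finset.Icc 1 (s - r - 1),
              ((s - r - ℓ : ℕ) : MvPolynomial (Fin 2) ℤ)
                * x ^ (r - 1 + ℓ) * y ^ (s - 1 - ℓ)) := by
  obtain ⟨a, rfl⟩ : ∃ a, r = a + 1 := ⟨r - 1, by omega⟩
  obtain ⟨d, hd1, rfl⟩ : ∃ d, 1 ≤ d ∧ s = a + 1 + d := ⟨s - (a + 1), by omega, by omega⟩
  have hexp : a + 1 - 1 = a := rfl
  have hsum : ∑ ℓ ∈ Finset.Icc 1 (a + 1 + d - (a + 1) - 1),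
      ((a + 1 + d - (a + 1) - ℓ : ℕ) : MvPolynomial (Fin 2) ℤ)
        * x ^ (a + 1 - 1 + ℓ) * y ^ (a + 1 + d - 1 - ℓ)
      = x ^ a * y ^ a * ∑ ℓ ∈ Finset.Icc 1 (d - 1),
          ((d - ℓ : ℕ) : MvPolynomial (Fin 2) ℤ) * x ^ ℓ * y ^ (d - ℓ) := by
    rw [Finset.mul_sum, show a + 1 + d - (a + 1) - 1 = d - 1 from by omega]
    refine Finset.sum_congr rfl fun ℓ hℓ => ?_
    simp only [Finset.mem_Icc] at hℓ
    rw [show a + 1 + d - (a + 1) - ℓ = d - ℓ from by omega,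
      show a + 1 - 1 + ℓ = a + ℓ from by omega,
      show a + 1 + d - 1 - ℓ = a + (d - ℓ) from by omega, pow_add, pow_add]
    ring
  rw [hsum, hexp, show a + 1 + d - 1 = a + d from by omega]
  have hc := core_aux d hd1
  push_cast
  linear_combination (-(x ^ a * y ^ a)) * hc
end
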